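/- Let $\xi>0$, $\rho\in(-1,1)$, $t\in[0,T]$, and $f,g:[0,T]\to\mathbb{C}$ bounded measurable with $\Re f=\Re g=0$. If $(f(t),g(t))\neq(0,0)$, then the quadratic polynomial $Q(X)=\frac{\xi^2}{2}X^2+\rho\xi f(t)X+g(t)+\frac{f^2(t)-f(t)}{2}$ has exactly two complex roots with strictly opposite-sign real parts; if $(f(t),g(t))=(0,0)$, then $Q$ has $0$ as a double root. -/

import Mathlib

/-!
The discriminant of `Q` is `ξ ^ 2 * D` with `D = f (1 - (1 - ρ²) f) - 2 g`, so its roots are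
`(-ρ f ± √D) / ξ`. As `ρ f` is purely imaginary, their real parts are `± Re √D / ξ`. Writing
`f = i a`, `g = i b` gives `D = (1 - ρ²) a² + i (a - 2 b)`, which avoids the slit `(-∞, 0]` unless
`a = b = 0`; off the slit the principal square root has positive real part.
-/

open Set Complex

namespace Complex

lemma sq_sqrt (z : ℂ) : z.sqrt ^ 2 = z :=
  cpow_ofNat_inv_pow z 2

lemma re_sqrt_pos {z : ℂ} (hz : z ∈ slitPlane) : 0 < z.sqrt.re := by
  rw [sqrt, cpow_inv_two_re, Real.sqrt_pos]
  rcases mem_slitPlane_iff.1 hz with hre | him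
  · linarith [norm_nonneg z]
  · linarith [abs_re_lt_norm.2 him, neg_abs_le z.re]

end Complex

def riccatiDiscr (ρ : ℝ) (f g : ℂ) : ℂ := f * (1 - (1 - ρ ^ 2) * f) - 2 * g

lemma riccatiDiscr_mem_slitPlane {ρ : ℝ} (hρ : ρ ^ 2 < 1) {f g : ℂ} (hf : f.re = 0)
    (hg : g.re = 0) (hfg : (f, g) ≠ (0, 0)) : riccatiDiscr ρ f g ∈ slitPlane := by
  have hre : (riccatiDiscr ρ f g).re = (1 - ρ ^ 2) * f.im ^ 2 := by
    simp [riccatiDiscr, hf, hg, ← ofReal_pow]; ring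
  have him : (riccatiDiscr ρ f g).im = f.im - 2 * g.im := by
    simp [riccatiDiscr, hf, hg, ← ofReal_pow]
  rw [mem_slitPlane_iff, hre, him]
  by_cases hfi : f.im = 0
  · have hf0 : f = 0 := Complex.ext hf hfi
    have hgi : g.im ≠ 0 := fun hgi => hfg (by simp [hf0, Complex.ext_iff, hg, hgi])
    right; rw [hfi]; simpa using hgi
  · left; have := sq_pos_of_ne_zero hfi; nlinarith

lemma riccati_quadratic_eq_zero_iff {ξ ρ : ℝ} (hξ : ξ ≠ 0) {f g w : ℂ}
    (hw : w ^ 2 = riccatiDiscr ρ f g) (X : ℂ) :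
    ((ξ ^ 2 / 2 : ℝ) : ℂ) * X ^ 2 + (ρ : ℂ) * (ξ : ℂ) * f * X + g + (f ^ 2 - f) / 2 = 0 ↔
      X = (-ρ * f - w) / ξ ∨ X = (-ρ * f + w) / ξ := by
  have hξC : (ξ : ℂ) ≠ 0 := ofReal_ne_zero.2 hξ
  have ha : ((ξ ^ 2 / 2 : ℝ) : ℂ) ≠ 0 := by simpa using hξ
  have hdiscr : discrim ((ξ ^ 2 / 2 : ℝ) : ℂ) (ρ * ξ * f) (g + (f ^ 2 - f) / 2)
      = (ξ * w) * (ξ * w) := by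
    rw [discrim, riccatiDiscr] at *; push_cast; linear_combination (ξ : ℂ) ^ 2 * hw.symm
  have hplus : (-(ρ * ξ * f) + ξ * w) / (2 * ((ξ ^ 2 / 2 : ℝ) : ℂ)) = (-ρ * f + w) / ξ := by
    push_cast; field_simp
  have hminus : (-(ρ * ξ * f) - ξ * w) / (2 * ((ξ ^ 2 / 2 : ℝ) : ℂ)) = (-ρ * f - w) / ξ := by
    push_cast; field_simp
  rw [show ((ξ ^ 2 / 2 : ℝ) : ℂ) * X ^ 2 + ρ * ξ * f * X + g + (f ^ 2 - f) / 2
      = ((ξ ^ 2 / 2 : ℝ) : ℂ) * (X * X) + ρ * ξ * f * X + (g + (f ^ 2 - f) / 2) by ring,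
    quadratic_eq_zero_iff ha hdiscr, hplus, hminus, or_comm]

lemma re_riccati_root {ξ ρ : ℝ} {f : ℂ} (hf : f.re = 0) (w : ℂ) :
    ((-ρ * f + w) / ξ).re = w.re / ξ := by
  rw [div_ofReal_re]; simp [hf]

theorem stmt7 (ξ ρ T t : ℝ) (hξ : 0 < ξ) (hρ : ρ ∈ Ioo (-1:ℝ) 1)
    (ht : t ∈ Icc (0:ℝ) T)
    (f g : ℝ → ℂ)
    (hfre : ∀ s ∈ Icc (0:ℝ) T, (f s).re = 0)
    (hgre : ∀ s ∈ Icc (0:ℝ) T, (g s).re = 0) :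
    ((f t, g t) ≠ ((0:ℂ), (0:ℂ)) →
      ∃ r1 r2 : ℂ, r1 ≠ r2 ∧ r1.re < 0 ∧ 0 < r2.re ∧
        ∀ X : ℂ, ((ξ^2/2 : ℝ) : ℂ) * X^2 + (ρ:ℂ)*(ξ:ℂ)*f t * X
            + g t + (f t ^ 2 - f t)/2 = 0 ↔ (X = r1 ∨ X = r2)) ∧
    ((f t, g t) = ((0:ℂ), (0:ℂ)) →
      ∀ X : ℂ, ((ξ^2/2 : ℝ) : ℂ) * X^2 + (ρ:ℂ)*(ξ:ℂ)*f t * X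
          + g t + (f t ^ 2 - f t)/2 = ((ξ^2/2 : ℝ) : ℂ) * X^2) := by
  have hf := hfre t ht
  refine ⟨fun hfg => ?_, fun hfg X => ?_⟩
  · have hρ2 : ρ ^ 2 < 1 := by nlinarith [hρ.1, hρ.2]
    set w := (riccatiDiscr ρ (f t) (g t)).sqrt
    have hw : 0 < w.re := re_sqrt_pos (riccatiDiscr_mem_slitPlane hρ2 hf (hgre t ht) hfg)
    have hr1 : ((-ρ * f t - w) / ξ).re < 0 := by
      rw [sub_eq_add_neg, re_riccati_root hf, neg_re]; exact div_neg_of_neg_of_pos (by linarith) hξ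
    have hr2 : 0 < ((-ρ * f t + w) / ξ).re := by
      rw [re_riccati_root hf]; positivity
    exact ⟨_, _, fun h => (h ▸ hr1).not_gt hr2, hr1, hr2,
      riccati_quadratic_eq_zero_iff hξ.ne' (sq_sqrt _)⟩
  · obtain ⟨hf0, hg0⟩ := Prod.mk.inj hfg
    rw [hf0, hg0]; ring
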